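/- Fix $L_0, L_1 > 0$ and $\Delta_1 > 0$. Let $f(w) = \frac{L_0}{L_1^2} e^{L_1 w - 1}$ for $w \ge 1/L_1$ (extended as in the counterexample $f_1$ elsewhere), and let the stochastic gradient oracle be $g = f'(w) + z$ where $z$ has density proportional to $e^{-\sqrt{|z|}/c}$ for some constant $c > 0$. Then for any starting point $w_t \ge 1/L_1$, any learning rate $\eta > 0$, any momentum coefficient $\beta \in [0,1)$, and any momentum value $m_{t-1} \in \mathbb{R}$, the SGDM update $w_{t+1} = w_t - \eta(\beta m_{t-1} + (1-\beta)(f'(w_t) + z))$ satisfies $\mathbb{E}_z[|f'(w_{t+1})|] = +\infty$. -/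

import Mathlib

open MeasureTheory

noncomputable def f1 (L0 L1 : ℝ) (x : ℝ) : ℝ :=
  if 1 / L1 ≤ x then L0 / L1 ^ 2 * Real.exp (L1 * x - 1)
  else if x ≤ -(1 / L1) then L0 / L1 ^ 2 * Real.exp (-(L1 * x) - 1)
  else L0 * x ^ 2 / 2 + L0 / (2 * L1 ^ 2)

/-!
After one SGDM step the iterate is `A - b z` with `b = η (1 - β) > 0` and `A` independent of
the noise `z`, so as `z → -∞` it lies on the exponential branch of `f1`, where
`|f1' (A - b z)| = (L0 / L1) exp (L1 (A - b z) - 1)`. Against the density `k exp (-√|z| / c)`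
the integrand is then at least `k (L0 / L1) exp (L1 A - 1) > 0` on a half-line, because the
linear growth `L1 b |z|` of the exponent beats `√|z| / c`; a half-line has infinite Lebesgue
measure.
-/

open Filter Set

lemma deriv_f1_of_lt (L0 : ℝ) {L1 x : ℝ} (hx : 1 / L1 < x) :
    deriv (f1 L0 L1) x = L0 / L1 * Real.exp (L1 * x - 1) := by
  have hev : f1 L0 L1 =ᶠ[nhds x] fun y => L0 / L1 ^ 2 * Real.exp (L1 * y - 1) := by
    filter_upwards [Ioi_mem_nhds hx] with y hy
    rw [f1, if_pos (le_of_lt hy)]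
  have hline : HasDerivAt (fun y : ℝ => L1 * y - 1) L1 x := by
    simpa using ((hasDerivAt_id x).const_mul L1).sub_const 1
  rw [hev.deriv_eq, (hline.exp.const_mul (L0 / L1 ^ 2)).deriv]
  by_cases hL1 : L1 = 0
  · simp [hL1]
  · field_simp

lemma eventually_sqrt_div_le_mul {a c : ℝ} (ha : 0 < a) (hc : 0 < c) :
    ∀ᶠ t in atTop, √t / c ≤ a * t := by
  filter_upwards [eventually_ge_atTop ((a * c)⁻¹ ^ 2)] with t ht
  have hsqrt : (a * c)⁻¹ ≤ √t := Real.le_sqrt_of_sq_le ht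
  have ht0 : 0 ≤ t := le_trans (sq_nonneg _) ht
  have hone : 1 ≤ a * c * √t := by
    rwa [inv_le_iff_one_le_mul₀ (by positivity), mul_comm] at hsqrt
  rw [div_le_iff₀ hc]
  calc √t = 1 * √t := (one_mul _).symm
    _ ≤ a * c * √t * √t := by gcongr
    _ = a * t * c := by rw [mul_assoc, Real.mul_self_sqrt ht0]; ring

lemma lintegral_eq_top_of_eventually_atBot_le {g : ℝ → ENNReal} {ε : ENNReal} (hε : ε ≠ 0)
    (hg : ∀ᶠ z in atBot, ε ≤ g z) : ∫⁻ z, g z = ⊤ := by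
  obtain ⟨R, hR⟩ := eventually_atBot.mp hg
  refine eq_top_iff.mpr (le_trans ?_ (setLIntegral_le_lintegral (Iic R) g))
  calc ⊤ = ∫⁻ _ in Iic R, ε := by rw [setLIntegral_const, Real.volume_Iic, ENNReal.mul_top hε]
    _ ≤ ∫⁻ z in Iic R, g z := setLIntegral_mono' measurableSet_Iic hR

lemma eventually_le_density_mul_abs_deriv_f1 {L0 L1 c k : ℝ} (hL0 : 0 ≤ L0) (hL1 : 0 < L1)
    (hc : 0 < c) (hk : 0 ≤ k) (A : ℝ) {b : ℝ} (hb : 0 < b) :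
    ∀ᶠ z in atBot, k * (L0 / L1) * Real.exp (L1 * A - 1) ≤
      k * Real.exp (-√|z| / c) * |deriv (f1 L0 L1) (A - b * z)| := by
  have hiterate : Tendsto (fun z => A - b * z) atBot atTop := by
    simpa [sub_eq_add_neg] using
      tendsto_atTop_add_const_left _ A (tendsto_neg_atBot_atTop.const_mul_atTop hb)
  have hsqrt : ∀ᶠ z in atBot, √(-z) / c ≤ L1 * b * -z :=
    tendsto_neg_atBot_atTop.eventually (eventually_sqrt_div_le_mul (mul_pos hL1 hb) hc)
  filter_upwards [hiterate.eventually_gt_atTop (1 / L1), hsqrt, eventually_le_atBot 0]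
    with z hbranch hdom hz
  rw [deriv_f1_of_lt L0 hbranch, abs_of_nonpos hz]
  calc k * (L0 / L1) * Real.exp (L1 * A - 1)
      ≤ k * (L0 / L1) * Real.exp (-√(-z) / c + (L1 * (A - b * z) - 1)) := by
        gcongr
        linarith [neg_div c √(-z)]
    _ = k * Real.exp (-√(-z) / c) * (L0 / L1 * Real.exp (L1 * (A - b * z) - 1)) := by
        rw [Real.exp_add]; ring
    _ ≤ _ := by gcongr; exact le_abs_self _

theorem sgdm_one_step_divergence_general (L0 L1 c k : ℝ)
    (hL0 : 0 < L0) (hL1 : 0 < L1) (hc : 0 < c) (hk : 0 < k)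
    (μ : Measure ℝ)
    (hμ : μ = volume.withDensity
      (fun z => ENNReal.ofReal (k * Real.exp (-(Real.sqrt |z|) / c))))
    (wt η β mprev : ℝ) (hη : 0 < η) (hβ1 : β < 1) :
    ∫⁻ z, ENNReal.ofReal
        |deriv (f1 L0 L1)
          (wt - η * (β * mprev + (1 - β) * (deriv (f1 L0 L1) wt + z)))| ∂μ = ⊤ := by
  subst hμ
  set A := wt - η * (β * mprev + (1 - β) * deriv (f1 L0 L1) wt)
  set b := η * (1 - β)
  have hstep (z : ℝ) :
      wt - η * (β * mprev + (1 - β) * (deriv (f1 L0 L1) wt + z)) = A - b * z := by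
    ring
  simp only [hstep]
  rw [lintegral_withDensity_eq_lintegral_mul_non_measurable _ (by fun_prop)
    (ae_of_all _ fun _ => ENNReal.ofReal_lt_top)]
  have hε : 0 < k * (L0 / L1) * Real.exp (L1 * A - 1) := by positivity
  refine lintegral_eq_top_of_eventually_atBot_le (ENNReal.ofReal_pos.mpr hε).ne' ?_
  filter_upwards [eventually_le_density_mul_abs_deriv_f1 hL0.le hL1 hc hk.le A
    (mul_pos hη (sub_pos.mpr hβ1))] with z hz
  rw [Pi.mul_apply, ← ENNReal.ofReal_mul (by positivity)]
  exact ENNReal.ofReal_le_ofReal hz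

theorem sgdm_one_step_divergence (L0 L1 Δ1 c k : ℝ)
    (hL0 : 0 < L0) (hL1 : 0 < L1) (hΔ1 : 0 < Δ1) (hc : 0 < c) (hk : 0 < k)
    (μ : Measure ℝ)
    (hμ : μ = volume.withDensity
      (fun z => ENNReal.ofReal (k * Real.exp (-(Real.sqrt |z|) / c))))
    (hprob : IsProbabilityMeasure μ)
    (wt η β mprev : ℝ) (hwt : 1 / L1 ≤ wt) (hη : 0 < η) (hβ0 : 0 ≤ β) (hβ1 : β < 1) :
    ∫⁻ z, ENNReal.ofReal
        |deriv (f1 L0 L1)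
          (wt - η * (β * mprev + (1 - β) * (deriv (f1 L0 L1) wt + z)))| ∂μ = ⊤ :=
  sgdm_one_step_divergence_general L0 L1 c k hL0 hL1 hc hk μ hμ wt η β mprev hη hβ1
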